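/- Failure of weak type (p,q) embedding estimates (Theorem 6.1, negative weak part): Let d ≥ 1 and ε > 0. For every triple (p,q,r) with either 1 ≤ q ≤ p ≤ ∞ and 0 < r < ∞, or 1 ≤ q < p ≤ ∞ and r = ∞, the function f = 1_{(−1,1)^d} ∈ L^p(ℝ^d) satisfies ‖t^{d/p − d/q} F(f)‖_{L^{q,∞}(ℓ^r)} = ∞ (for q = ∞ the weak quasi-norm is interpreted as ‖·‖_{L^∞(ℓ^r)}). In particular no constant C exists such that ‖t^{d/p − d/q} F(f)‖_{L^{q,∞}(ℓ^r)} ≤ C ‖f‖_{L^p(ℝ^d)} for all f ∈ L^p(ℝ^d). -/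

import Mathlib

open MeasureTheory Set
open scoped ENNReal

noncomputable section

/-- The outer `ℓ^r` size associated with an outer measure `μ` and a Borel measure `ν`:
for `r < ∞`, `ℓ^r(f)(A) = (μ(A)⁻¹ ∫_A f^r dν)^{1/r}`; for `r = ∞` the `ν`-essential
supremum of `f` on `A`. -/
def ellSize {X : Type*} [MeasurableSpace X] (μ : Set X → ℝ≥0∞) (ν : MeasureTheory.Measure X)
    (r : ℝ≥0∞) (f : X → ℝ≥0∞) (A : Set X) : ℝ≥0∞ :=
  if r = ∞ then essSup f (ν.restrict A)
  else ((μ A)⁻¹ * ∫⁻ x in A, f x ^ r.toReal ∂ν) ^ r.toReal⁻¹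

/-- The outer `L^∞(ℓ^r)` quasi-norm: supremum of the size over Borel sets. -/
def outerSup {X : Type*} [MeasurableSpace X] (μ : Set X → ℝ≥0∞) (ν : MeasureTheory.Measure X)
    (r : ℝ≥0∞) (f : X → ℝ≥0∞) : ℝ≥0∞ :=
  ⨆ (A : Set X) (_ : MeasurableSet A), ellSize μ ν r f A

/-- The super level measure `μ(ℓ^r(f) > λ)`. -/
def superLevel {X : Type*} [MeasurableSpace X] (μ : Set X → ℝ≥0∞) (ν : MeasureTheory.Measure X)
    (r : ℝ≥0∞) (f : X → ℝ≥0∞) (lam : ℝ≥0∞) : ℝ≥0∞ :=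
  ⨅ (A : Set X) (_ : MeasurableSet A)
    (_ : outerSup μ ν r (Aᶜ.indicator f) ≤ lam), μ A

/-- The outer `L^p(ℓ^r)` quasi-norm,
`‖f‖_{L^p(ℓ^r)} = (∫_0^∞ p λ^{p-1} μ(ℓ^r(f) > λ) dλ)^{1/p}` for `p < ∞`. -/
def outerLp {X : Type*} [MeasurableSpace X] (μ : Set X → ℝ≥0∞) (ν : MeasureTheory.Measure X)
    (p r : ℝ≥0∞) (f : X → ℝ≥0∞) : ℝ≥0∞ :=
  if p = ∞ then outerSup μ ν r f
  else (∫⁻ l in Ioi (0:ℝ),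
      ENNReal.ofReal (p.toReal * l ^ (p.toReal - 1)) *
        superLevel μ ν r f (ENNReal.ofReal l)) ^ p.toReal⁻¹

/-- The weak outer `L^{p,∞}(ℓ^r)` quasi-norm,
`‖f‖_{L^{p,∞}(ℓ^r)} = (sup_{λ>0} λ^p μ(ℓ^r(f) > λ))^{1/p}` for `p < ∞`. -/
def outerLpWeak {X : Type*} [MeasurableSpace X] (μ : Set X → ℝ≥0∞) (ν : MeasureTheory.Measure X)
    (p r : ℝ≥0∞) (f : X → ℝ≥0∞) : ℝ≥0∞ :=
  if p = ∞ then outerSup μ ν r f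
  else (⨆ (lam : ℝ≥0∞) (_ : 0 < lam), lam ^ p.toReal * superLevel μ ν r f lam) ^ p.toReal⁻¹

/-- The upper half space `ℝ^d × ℝ` (only the part `t > 0` carries mass). -/
abbrev UHS (d : ℕ) : Type := (Fin d → ℝ) × ℝ

/-- The measure `t⁻¹ dy dt` on the upper half space (vanishing on `{t ≤ 0}`). -/
def uhsMeasure (d : ℕ) : MeasureTheory.Measure (UHS d) :=
  (MeasureTheory.volume : MeasureTheory.Measure (Fin d → ℝ)).prod
    (MeasureTheory.volume.withDensity fun t => ENNReal.ofReal t⁻¹)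

/-- The open box `(x,0) + (0,s)^{d+1}` over `x ∈ ℝ^d` with side `s`. -/
def cbox (d : ℕ) (x : Fin d → ℝ) (s : ℝ) : Set (UHS d) :=
  {q | (∀ i, q.1 i ∈ Ioo (x i) (x i + s)) ∧ q.2 ∈ Ioo 0 s}

/-- The outer measure on the upper half space generated by covering with boxes,
`μ(A) = inf { Σ σ(E) : A ⊆ ∪ E }` where `σ(E) = s^d` is the volume of the base. -/
def boxOuter (d : ℕ) (A : Set (UHS d)) : ℝ≥0∞ :=
  ⨅ (C : Set ((Fin d → ℝ) × ℝ)) (_ : C.Countable) (_ : ∀ e ∈ C, 0 < e.2)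
    (_ : A ⊆ ⋃ e ∈ C, cbox d e.1 e.2),
    ∑' e : C, ENNReal.ofReal (e.1.2 ^ d)

/-- The Euclidean distance on `ℝ^d` realized as `Fin d → ℝ`. -/
def eudist {d : ℕ} (x y : Fin d → ℝ) : ℝ := Real.sqrt (∑ i, (x i - y i) ^ 2)

/-- The maximal embedded function
`F(f)(y,t) = ∫_{ℝ^d} |f(x)| t^{-d} (1 + t⁻¹|y−x|)^{-d-ε} dx` on the upper half space. -/
def embF (d : ℕ) (ε : ℝ) (f : (Fin d → ℝ) → ℝ) (w : UHS d) : ℝ≥0∞ :=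
  ∫⁻ x, ENNReal.ofReal (|f x| * w.2 ^ (-(d:ℝ)) * (1 + w.2⁻¹ * eudist w.1 x) ^ (-(d:ℝ) - ε))

lemma lintegral_inv_Ioo_top {t₁ : ℝ} (ht : 0 < t₁) :
    ∫⁻ t in Ioo (0:ℝ) t₁, ENNReal.ofReal t⁻¹ = ∞ := by
  set I : ℕ → Set ℝ := fun n => Ioc (t₁/2^(n+2)) (t₁/2^(n+1)) with hI
  have hpow : ∀ k : ℕ, (0:ℝ) < 2 ^ k := fun k => by positivity
  have hsub : (⋃ n, I n) ⊆ Ioo 0 t₁ := by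
    rintro x hx
    simp only [hI, mem_iUnion, mem_Ioc] at hx
    obtain ⟨n, h1, h2⟩ := hx
    refine ⟨lt_trans (by positivity) h1, lt_of_le_of_lt h2 ?_⟩
    rw [div_lt_iff₀ (hpow _)]
    have h21 : (1:ℝ) < 2 ^ (n+1) := one_lt_pow₀ one_lt_two (Nat.succ_ne_zero n)
    nlinarith
  have hmeas : ∀ n, MeasurableSet (I n) := fun n => measurableSet_Ioc
  have hdisj : Pairwise (Function.onFun Disjoint I) := by
    have key : ∀ m n : ℕ, m < n → Disjoint (I m) (I n) := by
      intro m n hmn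
      refine Set.Ioc_disjoint_Ioc.mpr ?_
      refine le_trans (min_le_right _ _) (le_trans ?_ (le_max_left _ _))
      apply div_le_div_of_nonneg_left ht.le (hpow _)
      apply pow_le_pow_right₀ one_le_two (by omega)
    intro m n hmn
    rcases lt_or_gt_of_ne hmn with h | h
    · exact key m n h
    · exact (key n m h).symm
  have h1 : ∀ n : ℕ, ENNReal.ofReal (2⁻¹ : ℝ) ≤ ∫⁻ t in I n, ENNReal.ofReal t⁻¹ := by
    intro n
    have hle : ∫⁻ t in I n, ENNReal.ofReal ((t₁/2^(n+1))⁻¹) ≤ ∫⁻ t in I n, ENNReal.ofReal t⁻¹ := by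
      refine setLIntegral_mono' (hmeas n) fun x hx => ?_
      refine ENNReal.ofReal_le_ofReal ?_
      exact inv_anti₀ (lt_of_lt_of_le (by positivity) hx.1.le) hx.2
    refine le_trans ?_ hle
    rw [setLIntegral_const, Real.volume_Ioc, ← ENNReal.ofReal_mul (by positivity)]
    refine ENNReal.ofReal_le_ofReal ?_
    have h2 : (t₁/2^(n+1))⁻¹ * (t₁ / 2 ^ (n + 1) - t₁ / 2 ^ (n + 2)) = 2⁻¹ := by
      field_simp
      ring
    rw [h2]
  refine le_antisymm le_top ?_
  calc (∞ : ℝ≥0∞) = ∑' _ : ℕ, ENNReal.ofReal (2⁻¹:ℝ) :=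
        (ENNReal.tsum_const_eq_top_of_ne_zero (by simp)).symm
    _ ≤ ∑' n : ℕ, ∫⁻ t in I n, ENNReal.ofReal t⁻¹ := ENNReal.tsum_le_tsum h1
    _ = ∫⁻ t in ⋃ n, I n, ENNReal.ofReal t⁻¹ := (lintegral_iUnion hmeas hdisj _).symm
    _ ≤ ∫⁻ t in Ioo (0:ℝ) t₁, ENNReal.ofReal t⁻¹ := lintegral_mono_set hsub

def Qset (d : ℕ) : Set (Fin d → ℝ) := univ.pi fun _ => Ioo (0:ℝ) 1

lemma cbox_eq (d : ℕ) (x : Fin d → ℝ) (s : ℝ) :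
    cbox d x s = (univ.pi fun i => Ioo (x i) (x i + s)) ×ˢ Ioo 0 s := by
  ext ⟨y, t⟩
  simp [cbox, Set.mem_pi]

lemma cbox_measurable (d : ℕ) (x : Fin d → ℝ) (s : ℝ) : MeasurableSet (cbox d x s) := by
  rw [cbox_eq]
  exact (MeasurableSet.univ_pi fun i => measurableSet_Ioo).prod measurableSet_Ioo

lemma uhs_prod_top {d : ℕ} {W : Set (Fin d → ℝ)} (hWm : MeasurableSet W)
    (hW0 : volume W ≠ 0) {t₁ : ℝ} (ht : 0 < t₁) :
    uhsMeasure d (W ×ˢ Ioo (0:ℝ) t₁) = ∞ := by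
  rw [uhsMeasure, Measure.prod_prod, withDensity_apply _ measurableSet_Ioo,
    lintegral_inv_Ioo_top ht, ENNReal.mul_top hW0]

lemma volume_Qset (d : ℕ) : volume (Qset d) = 1 := by
  simp [Qset, volume_pi_pi]

/-- the lower constant -/
def c0 (d : ℕ) (ε : ℝ) : ℝ := ((d:ℝ)^d)⁻¹ * 2 ^ (-(d:ℝ) - ε)

lemma c0_pos (d : ℕ) (hd : 1 ≤ d) (ε : ℝ) : 0 < c0 d ε := by
  have : (0:ℝ) < d := by exact_mod_cast hd
  unfold c0
  positivity

lemma embF_lower (d : ℕ) (hd : 1 ≤ d) {ε : ℝ} (hε : 0 < ε) {y : Fin d → ℝ} {t : ℝ}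
    (hy : ∀ i, y i ∈ Ioo (0:ℝ) 1) (ht : t ∈ Ioo (0:ℝ) 1) :
    ENNReal.ofReal (c0 d ε) ≤
      embF d ε ({x : Fin d → ℝ | ∀ i, x i ∈ Ioo (-1:ℝ) 1}.indicator fun _ => (1:ℝ)) (y, t) := by
  obtain ⟨ht0, ht1⟩ := ht
  have hdR : (1:ℝ) ≤ d := by exact_mod_cast hd
  have htd0 : 0 < t / d := by positivity
  have htd1 : t / d < 1 := lt_of_le_of_lt (div_le_self ht0.le hdR) ht1
  set P : Set (Fin d → ℝ) := univ.pi fun i => Ioo (y i - t/d) (y i) with hP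
  have hPm : MeasurableSet P := MeasurableSet.univ_pi fun i => measurableSet_Ioo
  have hptwise : ∀ x ∈ P,
      ENNReal.ofReal (t ^ (-(d:ℝ)) * 2 ^ (-(d:ℝ) - ε)) ≤
      ENNReal.ofReal (|({x : Fin d → ℝ | ∀ i, x i ∈ Ioo (-1:ℝ) 1}.indicator (fun _ => (1:ℝ))) x|
        * t ^ (-(d:ℝ)) * (1 + t⁻¹ * eudist y x) ^ (-(d:ℝ) - ε)) := by
    intro x hx
    have hxi : ∀ i, x i ∈ Ioo (y i - t/d) (y i) := fun i => hx i (mem_univ i)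
    have hcube : x ∈ {x : Fin d → ℝ | ∀ i, x i ∈ Ioo (-1:ℝ) 1} := by
      intro i
      have h1 := hxi i
      have h2 := hy i
      constructor <;> [nlinarith [h1.1, h2.1]; nlinarith [h1.2, h2.2]]
    rw [indicator_of_mem hcube, abs_one, one_mul]
    have hdist : eudist y x ≤ t := by
      have hsum : (∑ i, (y i - x i) ^ 2) ≤ t ^ 2 := by
        calc (∑ i, (y i - x i) ^ 2) ≤ ∑ _i : Fin d, (t/d)^2 := by
              refine Finset.sum_le_sum fun i _ => ?_
              have h1 := hxi i
              nlinarith [h1.1, h1.2]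
          _ = (d:ℝ) * (t/d)^2 := by
              rw [Finset.sum_const, Finset.card_univ, Fintype.card_fin, nsmul_eq_mul]
          _ ≤ t ^ 2 := by
              have hd0 : (0:ℝ) < d := by linarith
              have he : (d:ℝ) * (t/d)^2 = t^2/d := by field_simp
              rw [he]
              exact div_le_self (sq_nonneg t) hdR
      calc eudist y x = Real.sqrt (∑ i, (y i - x i)^2) := rfl
        _ ≤ Real.sqrt (t^2) := Real.sqrt_le_sqrt hsum
        _ = t := by rw [Real.sqrt_sq ht0.le]
    have he0 : 0 ≤ eudist y x := Real.sqrt_nonneg _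
    have hbase : 1 + t⁻¹ * eudist y x ≤ 2 := by
      have : t⁻¹ * eudist y x ≤ t⁻¹ * t := by
        exact mul_le_mul_of_nonneg_left hdist (by positivity)
      rw [inv_mul_cancel₀ ht0.ne'] at this
      linarith
    have hbase0 : (0:ℝ) < 1 + t⁻¹ * eudist y x := by positivity
    have hrp : (2:ℝ) ^ (-(d:ℝ) - ε) ≤ (1 + t⁻¹ * eudist y x) ^ (-(d:ℝ) - ε) := by
      apply Real.rpow_le_rpow_of_nonpos hbase0 hbase
      have : (0:ℝ) ≤ d := by positivity
      linarith
    refine ENNReal.ofReal_le_ofReal ?_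
    have htpow : (0:ℝ) ≤ t ^ (-(d:ℝ)) := Real.rpow_nonneg ht0.le _
    exact mul_le_mul_of_nonneg_left hrp htpow
  have hvol : volume P = ENNReal.ofReal ((t/d)^d) := by
    rw [hP, volume_pi_pi]
    simp only [Real.volume_Ioo, sub_sub_cancel]
    rw [Finset.prod_const, Finset.card_univ, Fintype.card_fin,
      ← ENNReal.ofReal_pow htd0.le]
  calc ENNReal.ofReal (c0 d ε)
      = ENNReal.ofReal (t ^ (-(d:ℝ)) * 2 ^ (-(d:ℝ) - ε)) * volume P := by
        rw [hvol, ← ENNReal.ofReal_mul (by positivity)]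
        congr 1
        rw [Real.rpow_neg ht0.le, Real.rpow_natCast, div_pow, c0]
        have h1 : (t:ℝ)^d ≠ 0 := by positivity
        have h2 : ((d:ℝ))^d ≠ 0 := by positivity
        field_simp
        try ring
    _ = ∫⁻ x, P.indicator (fun _ => ENNReal.ofReal (t ^ (-(d:ℝ)) * 2 ^ (-(d:ℝ) - ε))) x := by
        rw [lintegral_indicator hPm, setLIntegral_const]
    _ ≤ embF d ε ({x : Fin d → ℝ | ∀ i, x i ∈ Ioo (-1:ℝ) 1}.indicator fun _ => (1:ℝ)) (y, t) := by
        rw [embF]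
        refine lintegral_mono fun x => ?_
        by_cases hx : x ∈ P
        · rw [indicator_of_mem hx]; exact hptwise x hx
        · rw [indicator_of_notMem hx]; exact zero_le

lemma boxOuter_E0_le (d : ℕ) : boxOuter d (cbox d (fun _ => 0) 1) ≤ 1 := by
  rw [boxOuter]
  refine iInf_le_of_le {((fun _ => (0:ℝ)), (1:ℝ))} (iInf_le_of_le (countable_singleton _)
    (iInf_le_of_le ?_ (iInf_le_of_le ?_ ?_)))
  · rintro e he
    rw [mem_singleton_iff] at he
    subst he
    norm_num
  · intro w hw
    exact mem_biUnion rfl hw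
  · have := tsum_singleton (α := ℝ≥0∞) ((fun _ => (0:ℝ)), (1:ℝ))
      (fun b : (Fin d → ℝ) × ℝ => ENNReal.ofReal (b.2 ^ d))
    rw [this]
    norm_num

lemma outerSup_ge_ellSize {X : Type*} [MeasurableSpace X] (μ : Set X → ℝ≥0∞)
    (ν : MeasureTheory.Measure X) (r : ℝ≥0∞) (f : X → ℝ≥0∞) {A : Set X}
    (hA : MeasurableSet A) : ellSize μ ν r f A ≤ outerSup μ ν r f :=
  le_iSup₂_of_le A hA le_rfl

lemma ellSize_box_top (d : ℕ) {r : ℝ≥0∞} (hr0 : 0 < r) (hrT : r ≠ ∞)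
    {G : ((Fin d → ℝ) × ℝ) → ℝ≥0∞} {W : Set (Fin d → ℝ)} (hWm : MeasurableSet W)
    (hW0 : volume W ≠ 0) (hWQ : W ⊆ Qset d) {c : ℝ≥0∞} (hc : c ≠ 0) (hcT : c ≠ ∞)
    (hlow : ∀ y ∈ W, ∀ t ∈ Ioo (0:ℝ) 1, c ≤ G (y, t)) :
    ellSize (boxOuter d) (uhsMeasure d) r G (cbox d (fun _ => 0) 1) = ∞ := by
  have hsub : W ×ˢ Ioo (0:ℝ) 1 ⊆ cbox d (fun _ => 0) 1 := by
    rintro ⟨y, t⟩ ⟨hy, ht⟩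
    refine ⟨fun i => ?_, ht⟩
    have := (hWQ hy) i (mem_univ i)
    simpa using this
  have hrt : 0 < r.toReal := ENNReal.toReal_pos hr0.ne' hrT
  have hint : ∫⁻ w in cbox d (fun _ => 0) 1, G w ^ r.toReal ∂(uhsMeasure d) = ∞ := by
    refine eq_top_iff.mpr ?_
    calc (⊤:ℝ≥0∞) = c ^ r.toReal * uhsMeasure d (W ×ˢ Ioo (0:ℝ) 1) := by
          rw [uhs_prod_top hWm hW0 one_pos, ENNReal.mul_top]
          exact (ENNReal.rpow_pos (pos_iff_ne_zero.mpr hc) hcT).ne'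
      _ = ∫⁻ _w in W ×ˢ Ioo (0:ℝ) 1, c ^ r.toReal ∂(uhsMeasure d) := by
          rw [setLIntegral_const]
      _ ≤ ∫⁻ w in W ×ˢ Ioo (0:ℝ) 1, G w ^ r.toReal ∂(uhsMeasure d) := by
          refine setLIntegral_mono' (hWm.prod measurableSet_Ioo) ?_
          rintro ⟨y, t⟩ ⟨hy, ht⟩
          exact ENNReal.rpow_le_rpow (hlow y hy t ht) hrt.le
      _ ≤ ∫⁻ w in cbox d (fun _ => 0) 1, G w ^ r.toReal ∂(uhsMeasure d) := lintegral_mono_set hsub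
  rw [ellSize, if_neg hrT, hint, ENNReal.mul_top, ENNReal.top_rpow_of_pos (by positivity)]
  exact ENNReal.inv_ne_zero.mpr (lt_of_le_of_lt (boxOuter_E0_le d) ENNReal.one_lt_top).ne

lemma essSup_box_contra (d : ℕ) {G : ((Fin d → ℝ) × ℝ) → ℝ≥0∞} {W : Set (Fin d → ℝ)}
    (hWm : MeasurableSet W) (hW0 : volume W ≠ 0) (hWQ : W ⊆ Qset d)
    {t₁ : ℝ} (ht0 : 0 < t₁) (ht1 : t₁ ≤ 1) {lam : ℝ≥0∞}
    (hlow : ∀ y ∈ W, ∀ t ∈ Ioo (0:ℝ) t₁, lam < G (y, t))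
    (h : ellSize (boxOuter d) (uhsMeasure d) ∞ G (cbox d (fun _ => 0) 1) ≤ lam) : False := by
  rw [ellSize, if_pos rfl] at h
  have hae : ∀ᵐ w ∂((uhsMeasure d).restrict (cbox d (fun _ => 0) 1)), G w ≤ lam :=
    (ENNReal.ae_le_essSup G).mono fun w hw => hw.trans h
  rw [ae_iff] at hae
  have hsub : W ×ˢ Ioo (0:ℝ) t₁ ⊆ {w | ¬ G w ≤ lam} := by
    rintro ⟨y, t⟩ ⟨hy, ht⟩
    exact not_le.mpr (hlow y hy t ht)
  have hsubE : W ×ˢ Ioo (0:ℝ) t₁ ⊆ cbox d (fun _ => 0) 1 := by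
    rintro ⟨y, t⟩ ⟨hy, ht⟩
    refine ⟨fun i => ?_, ht.1, lt_of_lt_of_le ht.2 ht1⟩
    have := (hWQ hy) i (mem_univ i)
    simpa using this
  have h1 : (uhsMeasure d).restrict (cbox d (fun _ => 0) 1) (W ×ˢ Ioo (0:ℝ) t₁) = ∞ := by
    rw [Measure.restrict_apply (hWm.prod measurableSet_Ioo),
      inter_eq_self_of_subset_left hsubE, uhs_prod_top hWm hW0 ht0]
  have h2 := measure_mono (μ := (uhsMeasure d).restrict (cbox d (fun _ => 0) 1)) hsub
  rw [hae, h1] at h2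
  simp at h2

lemma qset_measurable (d : ℕ) : MeasurableSet (Qset d) :=
  MeasurableSet.univ_pi fun _ => measurableSet_Ioo

lemma key_lower (d : ℕ) (hd : 1 ≤ d) {ε : ℝ} (hε : 0 < ε) {a : ℝ} (ha : a ≤ 0)
    {r lam : ℝ≥0∞} (hlam : lam ≠ ∞)
    (hr : (0 < r ∧ r ≠ ∞) ∨ (r = ∞ ∧ a < 0))
    {A : Set ((Fin d → ℝ) × ℝ)}
    (h : outerSup (boxOuter d) (uhsMeasure d) r
        (Aᶜ.indicator fun w => ENNReal.ofReal (w.2 ^ a) *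
          embF d ε ({x : Fin d → ℝ | ∀ i, x i ∈ Ioo (-1:ℝ) 1}.indicator fun _ => (1:ℝ)) w)
        ≤ lam) :
    1 ≤ boxOuter d A := by
  set g : ((Fin d → ℝ) × ℝ) → ℝ≥0∞ := fun w => ENNReal.ofReal (w.2 ^ a) *
      embF d ε ({x : Fin d → ℝ | ∀ i, x i ∈ Ioo (-1:ℝ) 1}.indicator fun _ => (1:ℝ)) w with hg
  rw [boxOuter]
  refine le_iInf fun C => le_iInf fun hC => le_iInf fun hpos => le_iInf fun hcov => ?_
  set B : ((Fin d → ℝ) × ℝ) → Set (Fin d → ℝ) :=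
    fun e => {y | ∀ i, y i ∈ Ioo (e.1 i) (e.1 i + e.2)} with hB
  have hBpi : ∀ e, B e = univ.pi fun i => Ioo (e.1 i) (e.1 i + e.2) := by
    intro e; ext z; simp [hB, Set.mem_pi]
  set U := ⋃ e ∈ C, B e with hU
  have hUm : MeasurableSet U := by
    refine MeasurableSet.biUnion hC fun e _ => ?_
    rw [hBpi]
    exact MeasurableSet.univ_pi fun i => measurableSet_Ioo
  set W := Qset d \ U with hW
  have hWm : MeasurableSet W := (qset_measurable d).diff hUm
  have hWQ : W ⊆ Qset d := diff_subset
  have hWA : ∀ y ∈ W, ∀ t : ℝ, ((y, t) : (Fin d → ℝ) × ℝ) ∉ A := by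
    intro y hy t hyt
    have h2 := hcov hyt
    simp only [mem_iUnion] at h2
    obtain ⟨e, he, hm⟩ := h2
    exact hy.2 (mem_biUnion he fun i => hm.1 i)
  have hgl : ∀ y ∈ W, ∀ t ∈ Ioo (0:ℝ) 1,
      ENNReal.ofReal (t ^ a) * ENNReal.ofReal (c0 d ε) ≤ (Aᶜ.indicator g) (y, t) := by
    intro y hy t ht
    have hmem : ((y, t) : (Fin d → ℝ) × ℝ) ∈ Aᶜ := hWA y hy t
    rw [Set.indicator_of_mem hmem g]
    exact mul_le_mul_right (embF_lower d hd hε (fun i => (hWQ hy) i (mem_univ i)) ht) _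
  have hc0 := c0_pos d hd ε
  have hW0 : volume W = 0 := by
    by_contra hW0
    rcases hr with ⟨hr0, hrT⟩ | ⟨hrT, haneg⟩
    · have hlow : ∀ y ∈ W, ∀ t ∈ Ioo (0:ℝ) 1,
          ENNReal.ofReal (c0 d ε) ≤ (Aᶜ.indicator g) (y, t) := by
        intro y hy t ht
        refine le_trans ?_ (hgl y hy t ht)
        nth_rewrite 1 [← one_mul (ENNReal.ofReal (c0 d ε))]
        refine mul_le_mul_left ?_ _
        rw [← ENNReal.ofReal_one]
        refine ENNReal.ofReal_le_ofReal ?_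
        exact Real.one_le_rpow_of_pos_of_le_one_of_nonpos ht.1 ht.2.le ha
      have htop := ellSize_box_top d hr0 hrT hWm hW0 hWQ
        (ne_of_gt (ENNReal.ofReal_pos.mpr hc0)) ENNReal.ofReal_ne_top hlow
      have h3 : (⊤:ℝ≥0∞) ≤ lam := by
        rw [← htop]
        exact (outerSup_ge_ellSize _ _ _ _ (cbox_measurable d _ _)).trans h
      exact hlam (top_le_iff.mp h3)
    · subst hrT
      obtain ⟨n, hn⟩ := ENNReal.exists_nat_gt hlam
      have hn0 : (0:ℝ) < n := by
        have h0 : (0:ℝ≥0∞) < n := lt_of_le_of_lt zero_le hn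
        exact_mod_cast h0
      set B₀ : ℝ := (n:ℝ)/(c0 d ε) + 1 with hB₀
      have hBq : 0 < (n:ℝ)/(c0 d ε) := by positivity
      have hB1 : 1 < B₀ := by rw [hB₀]; linarith
      have ha0 : a ≠ 0 := haneg.ne
      set t₁ : ℝ := B₀ ^ a⁻¹ with ht₁
      have ht₁0 : 0 < t₁ := Real.rpow_pos_of_pos (by linarith) _
      have ht₁1 : t₁ < 1 :=
        Real.rpow_lt_one_of_one_lt_of_neg hB1 (inv_lt_zero.mpr haneg)
      have ht₁a : t₁ ^ a = B₀ := by
        rw [ht₁, ← Real.rpow_mul (by linarith : (0:ℝ) ≤ B₀), inv_mul_cancel₀ ha0,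
          Real.rpow_one]
      have hM : lam < ENNReal.ofReal (t₁ ^ a) * ENNReal.ofReal (c0 d ε) := by
        refine lt_of_lt_of_le hn ?_
        rw [← ENNReal.ofReal_mul (Real.rpow_nonneg ht₁0.le a)]
        rw [ht₁a]
        have hle : ((n:ℝ)) ≤ B₀ * c0 d ε := by
          have hfs : ((n:ℝ)/(c0 d ε) + 1) * c0 d ε = n + c0 d ε := by field_simp
          rw [hB₀, hfs]
          linarith
        calc (n:ℝ≥0∞) = ENNReal.ofReal n := (ENNReal.ofReal_natCast n).symm
          _ ≤ ENNReal.ofReal (B₀ * c0 d ε) := ENNReal.ofReal_le_ofReal hle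
      have hlow : ∀ y ∈ W, ∀ t ∈ Ioo (0:ℝ) t₁, lam < (Aᶜ.indicator g) (y, t) := by
        intro y hy t ht
        have ht' : t ∈ Ioo (0:ℝ) 1 := ⟨ht.1, lt_trans ht.2 ht₁1⟩
        refine lt_of_lt_of_le hM (le_trans ?_ (hgl y hy t ht'))
        refine mul_le_mul_left (ENNReal.ofReal_le_ofReal ?_) _
        exact Real.rpow_le_rpow_of_nonpos ht.1 ht.2.le haneg.le
      exact essSup_box_contra d hWm hW0 hWQ ht₁0 ht₁1.le hlow
        ((outerSup_ge_ellSize _ _ _ _ (cbox_measurable d _ _)).trans h)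
  have hQ : Qset d ⊆ W ∪ U := fun y hy => (em (y ∈ U)).elim Or.inr fun h' => Or.inl ⟨hy, h'⟩
  calc (1:ℝ≥0∞) = volume (Qset d) := (volume_Qset d).symm
    _ ≤ volume (W ∪ U) := measure_mono hQ
    _ ≤ volume W + volume U := measure_union_le _ _
    _ = volume U := by rw [hW0, zero_add]
    _ ≤ ∑' e : C, volume (B e) := measure_biUnion_le volume hC B
    _ ≤ ∑' e : C, ENNReal.ofReal ((e : ((Fin d → ℝ) × ℝ)).2 ^ d) := by
        refine ENNReal.tsum_le_tsum fun e => ?_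
        rw [hBpi, volume_pi_pi]
        simp only [Real.volume_Ioo, add_sub_cancel_left]
        rw [Finset.prod_const, Finset.card_univ, Fintype.card_fin,
          ← ENNReal.ofReal_pow (hpos e.1 e.2).le]

lemma main' (d : ℕ) (hd : 1 ≤ d) (ε : ℝ) (hε : 0 < ε)
    (p q r : ℝ≥0∞)
    (hpqr : (1 ≤ q ∧ q ≤ p ∧ 0 < r ∧ r ≠ ∞) ∨ (1 ≤ q ∧ q < p ∧ r = ∞)) :
    outerLpWeak (boxOuter d) (uhsMeasure d) q r
        (fun w => ENNReal.ofReal (w.2 ^ ((d:ℝ) / p.toReal - (d:ℝ) / q.toReal)) *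
          embF d ε ({x : Fin d → ℝ | ∀ i, x i ∈ Ioo (-1:ℝ) 1}.indicator fun _ => (1:ℝ)) w) =
      ∞ := by
  have hq1 : 1 ≤ q := hpqr.elim And.left And.left
  have hq0 : q ≠ 0 := by
    intro h0
    rw [h0] at hq1
    simp at hq1
  set a : ℝ := (d:ℝ) / p.toReal - (d:ℝ) / q.toReal with ha_def
  have hdR : (1:ℝ) ≤ d := by exact_mod_cast hd
  have hqtop_imp : q ≠ ∞ → 0 < q.toReal := fun hq => ENNReal.toReal_pos hq0 hq
  have hc0 := c0_pos d hd ε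
  have ha : a ≤ 0 := by
    rw [ha_def, sub_nonpos]
    by_cases hp : p = ∞
    · rw [hp]
      simp only [ENNReal.toReal_top, div_zero]
      positivity
    · have hqp : q ≤ p := hpqr.elim (fun h => h.2.1) (fun h => h.2.1.le)
      have hq : q ≠ ∞ := fun h => hp (top_le_iff.mp (h ▸ hqp))
      have h1 : 0 < q.toReal := hqtop_imp hq
      have h2 : q.toReal ≤ p.toReal := ENNReal.toReal_mono hp hqp
      gcongr
  have hr' : (0 < r ∧ r ≠ ∞) ∨ (r = ∞ ∧ a < 0) := by
    rcases hpqr with ⟨_, _, hr0, hrT⟩ | ⟨_, hqp, hrT⟩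
    · exact Or.inl ⟨hr0, hrT⟩
    · refine Or.inr ⟨hrT, ?_⟩
      rw [ha_def, sub_neg]
      have hq : q ≠ ∞ := hqp.ne_top
      have h1 : 0 < q.toReal := hqtop_imp hq
      have h3 : 0 < (d:ℝ) / q.toReal := by positivity
      by_cases hp : p = ∞
      · rw [hp]
        simpa [ENNReal.toReal_top] using h3
      · have h2 : q.toReal < p.toReal := ENNReal.toReal_strict_mono hp hqp
        exact div_lt_div_of_pos_left (by linarith) h1 h2
  by_cases hq : q = ∞
  · rw [outerLpWeak, if_pos hq]
    have hc1 : 0 < r ∧ r ≠ ∞ := by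
      rcases hpqr with ⟨_, _, hr0, hrT⟩ | ⟨_, hqp, _⟩
      · exact ⟨hr0, hrT⟩
      · exact absurd hq hqp.ne_top
    refine top_unique ?_
    have hlow : ∀ y ∈ Qset d, ∀ t ∈ Ioo (0:ℝ) 1,
        ENNReal.ofReal (c0 d ε) ≤ ENNReal.ofReal (t ^ a) *
          embF d ε ({x : Fin d → ℝ | ∀ i, x i ∈ Ioo (-1:ℝ) 1}.indicator fun _ => (1:ℝ)) (y, t) := by
      intro y hy t ht
      have hy' : ∀ i, y i ∈ Ioo (0:ℝ) 1 := fun i => hy i (mem_univ i)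
      refine le_trans ?_ (mul_le_mul_right (embF_lower d hd hε hy' ht) _)
      nth_rewrite 1 [← one_mul (ENNReal.ofReal (c0 d ε))]
      refine mul_le_mul_left ?_ _
      rw [← ENNReal.ofReal_one]
      exact ENNReal.ofReal_le_ofReal
        (Real.one_le_rpow_of_pos_of_le_one_of_nonpos ht.1 ht.2.le ha)
    have htop := ellSize_box_top d (G := fun w => ENNReal.ofReal (w.2 ^ a) *
        embF d ε ({x : Fin d → ℝ | ∀ i, x i ∈ Ioo (-1:ℝ) 1}.indicator fun _ => (1:ℝ)) w)
      hc1.1 hc1.2 (qset_measurable d)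
      (by rw [volume_Qset]; exact one_ne_zero) subset_rfl
      (ne_of_gt (ENNReal.ofReal_pos.mpr hc0)) ENNReal.ofReal_ne_top hlow
    rw [← htop]
    exact outerSup_ge_ellSize _ _ _ _ (cbox_measurable d _ _)
  · rw [outerLpWeak, if_neg hq]
    have hqt1 : 1 ≤ q.toReal := by
      rw [← ENNReal.toReal_one]
      exact ENNReal.toReal_mono hq hq1
    have hsup : (⨆ (lam : ℝ≥0∞) (_ : 0 < lam), lam ^ q.toReal *
        superLevel (boxOuter d) (uhsMeasure d) r
          (fun w => ENNReal.ofReal (w.2 ^ a) *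
            embF d ε ({x : Fin d → ℝ | ∀ i, x i ∈ Ioo (-1:ℝ) 1}.indicator fun _ => (1:ℝ)) w)
          lam) = ⊤ := by
      refine top_unique ?_
      rw [← ENNReal.iSup_natCast]
      refine iSup_le fun n => ?_
      have hSL : 1 ≤ superLevel (boxOuter d) (uhsMeasure d) r
          (fun w => ENNReal.ofReal (w.2 ^ a) *
            embF d ε ({x : Fin d → ℝ | ∀ i, x i ∈ Ioo (-1:ℝ) 1}.indicator fun _ => (1:ℝ)) w)
          ((n:ℝ≥0∞)+1) := by
        rw [superLevel]
        refine le_iInf fun A => le_iInf fun hA => le_iInf fun hle => ?_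
        exact key_lower d hd hε ha (by simp) hr' hle
      calc (n : ℝ≥0∞) ≤ ((n:ℝ≥0∞)+1) ^ q.toReal * 1 := by
            rw [mul_one]
            calc (n:ℝ≥0∞) ≤ (n:ℝ≥0∞)+1 := le_self_add
              _ = ((n:ℝ≥0∞)+1) ^ (1:ℝ) := (ENNReal.rpow_one _).symm
              _ ≤ ((n:ℝ≥0∞)+1) ^ q.toReal :=
                  ENNReal.rpow_le_rpow_of_exponent_le le_add_self hqt1
        _ ≤ ((n:ℝ≥0∞)+1) ^ q.toReal * superLevel (boxOuter d) (uhsMeasure d) r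
              (fun w => ENNReal.ofReal (w.2 ^ a) *
                embF d ε ({x : Fin d → ℝ | ∀ i, x i ∈ Ioo (-1:ℝ) 1}.indicator fun _ => (1:ℝ)) w)
              ((n:ℝ≥0∞)+1) := mul_le_mul_right hSL _
        _ ≤ _ := le_iSup₂_of_le ((n:ℝ≥0∞)+1) (lt_of_lt_of_le zero_lt_one le_add_self) le_rfl
    rw [hsup]
    exact ENNReal.top_rpow_of_pos (inv_pos.mpr (by linarith))

/-- Failure of weak type `(p,q)` embedding estimates (Theorem 6.1, negative weak part):
for `1 ≤ q ≤ p ≤ ∞, 0 < r < ∞` or `1 ≤ q < p ≤ ∞, r = ∞`, the function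
`f = 1_{(−1,1)^d}` satisfies `‖t^{d/p − d/q} F(f)‖_{L^{q,∞}(ℓ^r)} = ∞` (for `q = ∞`
the weak quasi-norm is the outer `L^∞(ℓ^r)` quasi-norm, as in `outerLpWeak`); in
particular no weak type `(p,q)` estimate holds. -/
theorem embedding_weak_type_failure (d : ℕ) (hd : 1 ≤ d) (ε : ℝ) (hε : 0 < ε)
    (p q r : ℝ≥0∞)
    (hpqr : (1 ≤ q ∧ q ≤ p ∧ 0 < r ∧ r ≠ ∞) ∨ (1 ≤ q ∧ q < p ∧ r = ∞)) :
    outerLpWeak (boxOuter d) (uhsMeasure d) q r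
        (fun w => ENNReal.ofReal (w.2 ^ ((d:ℝ) / p.toReal - (d:ℝ) / q.toReal)) *
          embF d ε ({x : Fin d → ℝ | ∀ i, x i ∈ Ioo (-1:ℝ) 1}.indicator fun _ => (1:ℝ)) w) =
      ∞ ∧
    ¬ ∃ C : ℝ≥0∞, C ≠ ∞ ∧
        ∀ f : (Fin d → ℝ) → ℝ, MemLp f p volume →
          outerLpWeak (boxOuter d) (uhsMeasure d) q r
              (fun w => ENNReal.ofReal (w.2 ^ ((d:ℝ) / p.toReal - (d:ℝ) / q.toReal)) *
                embF d ε f w) ≤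
            C * eLpNorm f p volume := by
  refine ⟨main' d hd ε hε p q r hpqr, ?_⟩
  rintro ⟨C, hC, hall⟩
  have hSpi : {x : Fin d → ℝ | ∀ i, x i ∈ Ioo (-1:ℝ) 1} =
      univ.pi fun _ => Ioo (-1:ℝ) 1 := by
    ext z; simp [Set.mem_pi]
  have hsm : MeasurableSet {x : Fin d → ℝ | ∀ i, x i ∈ Ioo (-1:ℝ) 1} := by
    rw [hSpi]
    exact MeasurableSet.univ_pi fun _ => measurableSet_Ioo
  have hμ : volume {x : Fin d → ℝ | ∀ i, x i ∈ Ioo (-1:ℝ) 1} ≠ ∞ := by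
    rw [hSpi, volume_pi_pi]
    simp only [Real.volume_Ioo, Finset.prod_const, Finset.card_univ, Fintype.card_fin]
    exact ENNReal.pow_ne_top ENNReal.ofReal_ne_top
  have hf : MemLp ({x : Fin d → ℝ | ∀ i, x i ∈ Ioo (-1:ℝ) 1}.indicator fun _ => (1:ℝ))
      p volume := memLp_indicator_const p hsm 1 (Or.inr hμ)
  have h2 := hall _ hf
  rw [main' d hd ε hε p q r hpqr] at h2
  have h3 : C * eLpNorm ({x : Fin d → ℝ | ∀ i, x i ∈ Ioo (-1:ℝ) 1}.indicator fun _ => (1:ℝ))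
      p volume < ⊤ := ENNReal.mul_lt_top hC.lt_top hf.2
  exact absurd (top_le_iff.mp h2) h3.ne

end
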